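/- arXiv:1110.4721 — 5 statements merged into one kernel-verified Lean document; each statement's English description precedes it below -/
import Mathlib

section
/- For every exponent 0 ≤ α < 1 and every fixed t ∈ ℝ, the product P_{N,α}(t) converges to 1 as N → ∞. -/
/-- Kac normalization `𝒩_α(N) = (2 ∑_{j=1}^{⌊N/2⌋} j^{−α})⁻¹`. -/
noncomputable def kacNorm (α : ℝ) (N : ℕ) : ℝ :=
  (2 * ∑ j ∈ Finset.Icc 1 (N / 2), (j : ℝ) ^ (-α))⁻¹

/-- The relaxation product `P_{N,α}(t) = ∏_{j=1}^{⌊N/2⌋} cos²(2 𝒩_α(N) t j^{−α})`. -/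
noncomputable def relaxProd (α : ℝ) (N : ℕ) (t : ℝ) : ℝ :=
  ∏ j ∈ Finset.Icc 1 (N / 2), Real.cos (2 * kacNorm α N * t * (j : ℝ) ^ (-α)) ^ 2

/-!
Write `S = ∑_{j ≤ N/2} j^{-α}`, so that `2 𝒩_α(N) = S⁻¹`. Since `cos² x = 1 - sin² x` and
`sin² x ≤ x²`, the Weierstrass product inequality gives
`1 - P_{N,α}(t) ≤ ∑_j (t j^{-α} / S)² ≤ t² / S`, using `j^{-α} ≤ 1` for `α ≥ 0`.
For `α < 1` the `p`-series `∑ j^{-α}` diverges, so `S → ∞` and `P_{N,α}(t) → 1`.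
-/

open Filter Finset Topology

theorem one_sub_sum_le_prod_one_sub {R ι : Type*} [CommRing R] [LinearOrder R]
    [IsStrictOrderedRing R] (s : Finset ι) (f : ι → R)
    (h0 : ∀ i ∈ s, 0 ≤ f i) (h1 : ∀ i ∈ s, f i ≤ 1) :
    1 - ∑ i ∈ s, f i ≤ ∏ i ∈ s, (1 - f i) := by
  induction s using Finset.cons_induction with
  | empty => simp
  | cons a s _ ih =>
    rw [prod_cons, sum_cons]
    have ih' := ih (fun i hi => h0 i (mem_cons_of_mem hi)) (fun i hi => h1 i (mem_cons_of_mem hi))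
    have hsum : 0 ≤ ∑ i ∈ s, f i := sum_nonneg fun i hi => h0 i (mem_cons_of_mem hi)
    nlinarith [h0 a (mem_cons_self a s), h1 a (mem_cons_self a s)]

theorem one_sub_sq_mul_sum_le_prod_cos_sq {ι : Type*} (s : Finset ι) (a : ι → ℝ)
    (h0 : ∀ i ∈ s, 0 ≤ a i) (h1 : ∀ i ∈ s, a i ≤ 1) (c : ℝ) :
    1 - c ^ 2 * ∑ i ∈ s, a i ≤ ∏ i ∈ s, Real.cos (c * a i) ^ 2 := by
  have hsin : ∀ i ∈ s, Real.sin (c * a i) ^ 2 ≤ c ^ 2 * a i := fun i hi =>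
    calc Real.sin (c * a i) ^ 2 ≤ (c * a i) ^ 2 := Real.sin_sq_le_sq
      _ = c ^ 2 * a i * a i := by ring
      _ ≤ c ^ 2 * a i := mul_le_of_le_one_right (by have := h0 i hi; positivity) (h1 i hi)
  calc 1 - c ^ 2 * ∑ i ∈ s, a i
      ≤ 1 - ∑ i ∈ s, Real.sin (c * a i) ^ 2 := by
        rw [mul_sum]; linarith [sum_le_sum hsin]
    _ ≤ ∏ i ∈ s, (1 - Real.sin (c * a i) ^ 2) :=
        one_sub_sum_le_prod_one_sub s _ (fun _ _ => sq_nonneg _) fun _ _ => Real.sin_sq_le_one _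
    _ = ∏ i ∈ s, Real.cos (c * a i) ^ 2 := by simp only [Real.cos_sq']

theorem tendsto_sum_Icc_rpow_neg_atTop {α : ℝ} (hα : α < 1) :
    Tendsto (fun M : ℕ => ∑ j ∈ Icc 1 M, (j : ℝ) ^ (-α)) atTop atTop := by
  have hdiv : ¬Summable fun i : ℕ => ((i + 1 : ℕ) : ℝ) ^ (-α) := by
    refine mt (summable_nat_add_iff (f := fun n : ℕ => (n : ℝ) ^ (-α)) 1).1 ?_
    rw [Real.summable_nat_rpow]
    linarith
  rw [not_summable_iff_tendsto_nat_atTop_of_nonneg fun _ => by positivity] at hdiv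
  refine hdiv.congr fun M => ?_
  rw [range_eq_Ico, ← Ico_add_one_right_eq_Icc]
  exact sum_Ico_add' (fun j : ℕ => (j : ℝ) ^ (-α)) 0 M 1

theorem tendsto_kacNorm_atTop_zero {α : ℝ} (hα : α < 1) :
    Tendsto (kacNorm α) atTop (𝓝 0) := by
  have hS := (tendsto_sum_Icc_rpow_neg_atTop hα).comp (Nat.tendsto_div_const_atTop two_ne_zero)
  exact (hS.const_mul_atTop two_pos).inv_tendsto_atTop

theorem relaxProd_le_one (α : ℝ) (N : ℕ) (t : ℝ) : relaxProd α N t ≤ 1 :=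
  prod_le_one (fun _ _ => sq_nonneg _) fun _ _ => Real.cos_sq_le_one _

theorem one_sub_le_relaxProd {α : ℝ} (hα : 0 ≤ α) (N : ℕ) (t : ℝ) :
    1 - t ^ 2 * (2 * kacNorm α N) ≤ relaxProd α N t := by
  set S := ∑ j ∈ Icc 1 (N / 2), (j : ℝ) ^ (-α)
  have h2k : 2 * kacNorm α N = S⁻¹ := by
    rw [kacNorm, mul_inv, ← mul_assoc, mul_inv_cancel₀ two_ne_zero, one_mul]
  have key := one_sub_sq_mul_sum_le_prod_cos_sq (Icc 1 (N / 2)) (fun j : ℕ => (j : ℝ) ^ (-α))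
    (fun _ _ => by positivity)
    (fun j hj => Real.rpow_le_one_of_one_le_of_nonpos (by exact_mod_cast (mem_Icc.1 hj).1)
      (neg_nonpos.2 hα))
    (2 * kacNorm α N * t)
  calc 1 - t ^ 2 * (2 * kacNorm α N) = 1 - (2 * kacNorm α N * t) ^ 2 * S := by
        rw [h2k]
        rcases eq_or_ne S 0 with hS | hS
        · simp [hS]
        · field_simp
    _ ≤ relaxProd α N t := key

/-- for every `0 ≤ α < 1` and every fixed `t`, `P_{N,α}(t) → 1` as `N → ∞`. -/
theorem stmt_2 (α : ℝ) (hα0 : 0 ≤ α) (hα1 : α < 1) (t : ℝ) :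
    Filter.Tendsto (fun N : ℕ => relaxProd α N t) Filter.atTop (nhds 1) := by
  have hlow : Tendsto (fun N => 1 - t ^ 2 * (2 * kacNorm α N)) atTop (𝓝 1) := by
    simpa using ((tendsto_kacNorm_atTop_zero hα1).const_mul 2 |>.const_mul (t ^ 2)).const_sub 1
  exact tendsto_of_tendsto_of_tendsto_of_le_of_le hlow tendsto_const_nhds
    (one_sub_le_relaxProd hα0 · t) (relaxProd_le_one α · t)
end

section
/- Fix α > 0, an integer N ≥ 2 and t ∈ ℝ, and let M = ⌈(4 𝒩_α(N) |t| / π)^{1/α}⌉ (so that 2 𝒩_α(N) |t| / j^α ≤ π/2 for all j ≥ M). If M ≤ ⌊N/2⌋, then P_{N,α}(t) ≤ ∏_{j=M}^{⌊N/2⌋} (1 − (4 𝒩_α(N) t / (π j^α))²) ≤ exp(−(4 𝒩_α(N) t / π)² ∑_{j=M}^{⌊N/2⌋} j^{−2α}). -/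
/-- For `|x| ≤ π/2`, `cos² x ≤ 1 - (2x/π)²` (via Jordan's inequality). -/
lemma cos_sq_le_aux (x : ℝ) (hx : |x| ≤ Real.pi / 2) :
    Real.cos x ^ 2 ≤ 1 - (2 * x / Real.pi) ^ 2 := by
  have hπ : (0:ℝ) < Real.pi := Real.pi_pos
  have h1 : 2 / Real.pi * |x| ≤ Real.sin |x| := Real.mul_le_sin (abs_nonneg x) hx
  have h2 : (2 / Real.pi * |x|) ^ 2 ≤ Real.sin |x| ^ 2 :=
    pow_le_pow_left₀ (by positivity) h1 2
  have h3 : Real.sin |x| ^ 2 = Real.sin x ^ 2 := by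
    rcases abs_cases x with ⟨h, _⟩ | ⟨h, _⟩ <;> rw [h] <;> simp
  have h4 := Real.sin_sq_add_cos_sq x
  have h5 : (2 / Real.pi * |x|) ^ 2 = (2 * x / Real.pi) ^ 2 := by
    rw [div_mul_eq_mul_div, div_pow, div_pow, mul_pow, mul_pow, sq_abs]
  nlinarith [h2, h3, h4, h5]

/-- upper bound on `P_{N,α}(t)` via the cutoff
`M = ⌈(4 𝒩_α(N) |t| / π)^{1/α}⌉`. -/
theorem stmt_6 (α : ℝ) (hα : 0 < α) (N : ℕ) (hN : 2 ≤ N) (t : ℝ)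
    (M : ℕ) (hM : M = ⌈(4 * kacNorm α N * |t| / Real.pi) ^ (1 / α)⌉₊)
    (hMN : M ≤ N / 2) :
    relaxProd α N t ≤
      ∏ j ∈ Finset.Icc M (N / 2), (1 - (4 * kacNorm α N * t / (Real.pi * (j : ℝ) ^ α)) ^ 2) ∧
    ∏ j ∈ Finset.Icc M (N / 2), (1 - (4 * kacNorm α N * t / (Real.pi * (j : ℝ) ^ α)) ^ 2) ≤
      Real.exp (-(4 * kacNorm α N * t / Real.pi) ^ 2 *
        ∑ j ∈ Finset.Icc M (N / 2), (j : ℝ) ^ (-(2 * α))) := by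
  have hπ : (0:ℝ) < Real.pi := Real.pi_pos
  have hNle : 1 ≤ N / 2 := by omega
  have hsum : 0 < ∑ j ∈ Finset.Icc 1 (N / 2), (j : ℝ) ^ (-α) := by
    apply Finset.sum_pos
    · intro j hj
      have h1 : 1 ≤ j := (Finset.mem_Icc.mp hj).1
      have : (0:ℝ) < (j:ℝ) := by exact_mod_cast h1
      positivity
    · exact ⟨1, Finset.mem_Icc.mpr ⟨le_refl 1, hNle⟩⟩
  have h𝒩 : 0 < kacNorm α N := by unfold kacNorm; positivity
  set c : ℝ := kacNorm α N with hc
  -- critical bound: for j ≥ M with j ≥ 1 we have 4c|t| ≤ π j^α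
  have hcrit : ∀ j : ℕ, M ≤ j → 1 ≤ j → 4 * c * |t| ≤ Real.pi * (j:ℝ) ^ α := by
    intro j hMj h1j
    have hb : (0:ℝ) ≤ 4 * c * |t| / Real.pi := by positivity
    have h1 : (4 * c * |t| / Real.pi) ^ (1/α) ≤ (j:ℝ) := by
      calc (4 * c * |t| / Real.pi) ^ (1/α) ≤ (M:ℝ) := by rw [hM]; exact Nat.le_ceil _
        _ ≤ (j:ℝ) := by exact_mod_cast hMj
    have h2 : ((4 * c * |t| / Real.pi) ^ (1/α)) ^ α ≤ (j:ℝ) ^ α :=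
      Real.rpow_le_rpow (Real.rpow_nonneg hb _) h1 hα.le
    rw [← Real.rpow_mul hb, one_div, inv_mul_cancel₀ hα.ne', Real.rpow_one] at h2
    calc 4 * c * |t| = Real.pi * (4 * c * |t| / Real.pi) := by field_simp
      _ ≤ Real.pi * (j:ℝ) ^ α := mul_le_mul_of_nonneg_left h2 hπ.le
  -- nonnegativity of the middle product terms
  have hterm_nonneg : ∀ j ∈ Finset.Icc M (N / 2),
      0 ≤ 1 - (4 * c * t / (Real.pi * (j:ℝ) ^ α)) ^ 2 := by
    intro j hj
    rcases Nat.eq_zero_or_pos j with rfl | hj1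
    · simp [Real.zero_rpow hα.ne']
    · have hk := hcrit j (Finset.mem_Icc.mp hj).1 hj1
      have hjc : (0:ℝ) < (j:ℝ) := by exact_mod_cast hj1
      have hjα : (0:ℝ) < (j:ℝ) ^ α := by positivity
      have habs : |4 * c * t / (Real.pi * (j:ℝ) ^ α)| ≤ 1 := by
        rw [abs_div, div_le_one (by rw [abs_of_pos (by positivity)]; positivity)]
        calc |4 * c * t| = 4 * c * |t| := by
              rw [abs_mul, abs_of_nonneg (by positivity : (0:ℝ) ≤ 4 * c)]
          _ ≤ Real.pi * (j:ℝ) ^ α := hk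
          _ = |Real.pi * (j:ℝ) ^ α| := (abs_of_pos (by positivity)).symm
      have : (4 * c * t / (Real.pi * (j:ℝ) ^ α)) ^ 2 ≤ 1 := by
        calc (4 * c * t / (Real.pi * (j:ℝ) ^ α)) ^ 2
            = |4 * c * t / (Real.pi * (j:ℝ) ^ α)| ^ 2 := (sq_abs _).symm
          _ ≤ 1 ^ 2 := pow_le_pow_left₀ (abs_nonneg _) habs 2
          _ = 1 := one_pow 2
      linarith
  -- per-term cosine bound for j ≥ max M 1
  have hperterm : ∀ j ∈ Finset.Icc (max M 1) (N / 2),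
      Real.cos (2 * c * t * (j:ℝ) ^ (-α)) ^ 2 ≤
        1 - (4 * c * t / (Real.pi * (j:ℝ) ^ α)) ^ 2 := by
    intro j hj
    obtain ⟨hjl, hjr⟩ := Finset.mem_Icc.mp hj
    have hMj : M ≤ j := le_trans (le_max_left _ _) hjl
    have h1j : 1 ≤ j := le_trans (le_max_right _ _) hjl
    have hjc : (0:ℝ) < (j:ℝ) := by exact_mod_cast h1j
    have hjα : (0:ℝ) < (j:ℝ) ^ α := by positivity
    have hk := hcrit j hMj h1j
    have hrw : (j:ℝ) ^ (-α) = ((j:ℝ) ^ α)⁻¹ := Real.rpow_neg hjc.le α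
    have hxabs : |2 * c * t * (j:ℝ) ^ (-α)| ≤ Real.pi / 2 := by
      rw [hrw, abs_mul, abs_mul, abs_of_nonneg (by positivity : (0:ℝ) ≤ 2 * c),
        abs_of_nonneg (by positivity : (0:ℝ) ≤ ((j:ℝ) ^ α)⁻¹)]
      rw [← div_eq_mul_inv, div_le_div_iff₀ hjα (by norm_num : (0:ℝ) < 2)]
      nlinarith [hk]
    have h1 := cos_sq_le_aux _ hxabs
    have h2 : 2 * (2 * c * t * (j:ℝ) ^ (-α)) / Real.pi
        = 4 * c * t / (Real.pi * (j:ℝ) ^ α) := by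
      rw [hrw]; field_simp; ring
    rw [h2] at h1
    exact h1
  -- equality between products over Icc M and Icc (max M 1)
  have hseteq : ∏ j ∈ Finset.Icc M (N / 2), (1 - (4 * c * t / (Real.pi * (j:ℝ) ^ α)) ^ 2)
      = ∏ j ∈ Finset.Icc (max M 1) (N / 2), (1 - (4 * c * t / (Real.pi * (j:ℝ) ^ α)) ^ 2) := by
    rcases Nat.eq_zero_or_pos M with rfl | hM1
    · rw [show max 0 1 = 1 from rfl]
      rw [Finset.Icc_eq_cons_Ioc (Nat.zero_le _), Finset.prod_cons, ← Finset.Icc_add_one_left_eq_Ioc]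
      simp [Real.zero_rpow hα.ne']
    · rw [Nat.max_eq_left hM1]
  constructor
  · -- first inequality
    have hsub : Finset.Icc (max M 1) (N / 2) ⊆ Finset.Icc 1 (N / 2) :=
      Finset.Icc_subset_Icc (le_max_right _ _) le_rfl
    have step1 : relaxProd α N t ≤
        ∏ j ∈ Finset.Icc (max M 1) (N / 2), Real.cos (2 * c * t * (j:ℝ) ^ (-α)) ^ 2 := by
      unfold relaxProd
      rw [← hc, ← Finset.prod_sdiff hsub]
      have hle1 : ∏ j ∈ Finset.Icc 1 (N / 2) \ Finset.Icc (max M 1) (N / 2),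
          Real.cos (2 * c * t * (j:ℝ) ^ (-α)) ^ 2 ≤ 1 :=
        Finset.prod_le_one (fun j _ => sq_nonneg _)
          (fun j _ => by nlinarith [Real.neg_one_le_cos (2 * c * t * (j:ℝ) ^ (-α)),
            Real.cos_le_one (2 * c * t * (j:ℝ) ^ (-α))])
      have hpos : 0 ≤ ∏ j ∈ Finset.Icc (max M 1) (N / 2),
          Real.cos (2 * c * t * (j:ℝ) ^ (-α)) ^ 2 :=
        Finset.prod_nonneg (fun j _ => sq_nonneg _)
      nlinarith [mul_le_mul_of_nonneg_right hle1 hpos]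
    calc relaxProd α N t
        ≤ ∏ j ∈ Finset.Icc (max M 1) (N / 2), Real.cos (2 * c * t * (j:ℝ) ^ (-α)) ^ 2 := step1
      _ ≤ ∏ j ∈ Finset.Icc (max M 1) (N / 2),
            (1 - (4 * c * t / (Real.pi * (j:ℝ) ^ α)) ^ 2) :=
          Finset.prod_le_prod (fun j _ => sq_nonneg _) hperterm
      _ = ∏ j ∈ Finset.Icc M (N / 2),
            (1 - (4 * c * t / (Real.pi * (j:ℝ) ^ α)) ^ 2) := hseteq.symm
  · -- second inequality
    have heq : ∀ j ∈ Finset.Icc M (N / 2),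
        (4 * c * t / (Real.pi * (j:ℝ) ^ α)) ^ 2
          = (4 * c * t / Real.pi) ^ 2 * (j:ℝ) ^ (-(2 * α)) := by
      intro j _
      rcases Nat.eq_zero_or_pos j with rfl | hj1
      · have hne : -(2 * α) ≠ 0 := by intro h; nlinarith
        simp [Real.zero_rpow hα.ne', Real.zero_rpow hne]
      · have hjc : (0:ℝ) < (j:ℝ) := by exact_mod_cast hj1
        have hjα : ((j:ℝ) ^ α) ≠ 0 := by positivity
        rw [Real.rpow_neg hjc.le, show (2 * α) = α * 2 by ring, Real.rpow_mul hjc.le,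
          Real.rpow_two, div_pow, div_pow, mul_pow Real.pi ((j:ℝ) ^ α) 2, ← div_div,
          div_eq_mul_inv]
    calc ∏ j ∈ Finset.Icc M (N / 2), (1 - (4 * c * t / (Real.pi * (j:ℝ) ^ α)) ^ 2)
        ≤ ∏ j ∈ Finset.Icc M (N / 2),
            Real.exp (-(4 * c * t / Real.pi) ^ 2 * (j:ℝ) ^ (-(2 * α))) := by
          apply Finset.prod_le_prod hterm_nonneg
          intro j hj
          rw [heq j hj]
          have := Real.add_one_le_exp (-(4 * c * t / Real.pi) ^ 2 * (j:ℝ) ^ (-(2 * α)))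
          linarith
      _ = Real.exp (∑ j ∈ Finset.Icc M (N / 2),
            -(4 * c * t / Real.pi) ^ 2 * (j:ℝ) ^ (-(2 * α))) := (Real.exp_sum _ _).symm
      _ = Real.exp (-(4 * c * t / Real.pi) ^ 2 *
            ∑ j ∈ Finset.Icc M (N / 2), (j:ℝ) ^ (-(2 * α))) := by
          rw [← Finset.mul_sum]
end

section
/- Fix 1/2 < α < 1 and τ ∈ ℝ with 2^{1−α}(1−α)|τ| < π/2. Then limsup_{N→∞} P_{N,α}(τ N^{1−α}) ≤ exp(−(4(1−α)/(2^α π))² ζ(2α) τ²), where ζ is the Riemann zeta function. -/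
open Real Filter Finset

private lemma relaxProd_nonneg (α : ℝ) (N : ℕ) (t : ℝ) : 0 ≤ relaxProd α N t :=
  Finset.prod_nonneg fun _ _ => sq_nonneg _

private lemma cos_sq_le_exp_aux {x : ℝ} (hx : |x| ≤ π / 2) :
    Real.cos x ^ 2 ≤ Real.exp (-(2 / π * x) ^ 2) := by
  have h1 : 2 / π * |x| ≤ Real.sin |x| := Real.mul_le_sin (abs_nonneg x) hx
  have h2 : (2 / π * x) ^ 2 ≤ Real.sin x ^ 2 := by
    have hnn : 0 ≤ 2 / π * |x| := by positivity
    have h := pow_le_pow_left₀ hnn h1 2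
    have hsq : Real.sin |x| ^ 2 = Real.sin x ^ 2 := by
      rcases abs_cases x with ⟨h, _⟩ | ⟨h, _⟩ <;> rw [h] <;> simp [Real.sin_neg]
    calc (2 / π * x) ^ 2 = (2 / π * |x|) ^ 2 := by rw [mul_pow, mul_pow, sq_abs]
      _ ≤ Real.sin |x| ^ 2 := h
      _ = Real.sin x ^ 2 := hsq
  have h3 : Real.cos x ^ 2 = 1 - Real.sin x ^ 2 := by
    have := Real.sin_sq_add_cos_sq x; linarith
  linarith [Real.add_one_le_exp (-(2 / π * x) ^ 2)]

private lemma rpow_sq_aux (α : ℝ) {x : ℝ} (hx : 0 ≤ x) :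
    (x ^ (-α)) ^ 2 = x ^ (-(2 * α)) := by
  rw [← Real.rpow_natCast (x ^ (-α)) 2, ← Real.rpow_mul hx]
  congr 1
  push_cast
  ring

/-- Antitonicity of `x ↦ x^{-α}` on `[1, b]`. -/
private lemma antitoneOn_rpow_neg (α : ℝ) (hα : 0 < α) (b : ℝ) :
    AntitoneOn (fun x : ℝ => x ^ (-α)) (Set.Icc 1 b) := fun x hx _y _hy hxy =>
  Real.rpow_le_rpow_of_nonpos (lt_of_lt_of_le one_pos hx.1) hxy (by linarith)

set_option maxHeartbeats 2000000 in
/-- Gaussian upper bound in rescaled time `t = τ N^{1−α}` for `1/2 < α < 1`,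
involving the Riemann zeta value `ζ(2α)`. -/
theorem stmt_8 (α : ℝ) (hα0 : 1 / 2 < α) (hα1 : α < 1) (τ : ℝ)
    (hτ : 2 ^ (1 - α) * (1 - α) * |τ| < Real.pi / 2) :
    Filter.limsup (fun N : ℕ => relaxProd α N (τ * (N : ℝ) ^ (1 - α))) Filter.atTop ≤
      Real.exp (-(4 * (1 - α) / (2 ^ α * Real.pi)) ^ 2 *
        (riemannZeta (2 * α)).re * τ ^ 2) := by
  have hπ : 0 < π := Real.pi_pos
  have hα0' : 0 < α := by linarith
  have h1α : 0 < 1 - α := by linarith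
  have h2α : (0:ℝ) < 2 ^ α := Real.rpow_pos_of_pos two_pos α
  have h2α' : (2:ℝ) ^ (1 - α) = 2 / 2 ^ α := by
    rw [Real.rpow_sub two_pos, Real.rpow_one]
  -- the constant
  set a : ℝ := 2 ^ (1 - α) * (1 - α) * |τ| with ha
  have ha0 : 0 ≤ a := by positivity
  set C : ℝ := (4 * (1 - α) / (2 ^ α * π)) ^ 2 * τ ^ 2 with hCdef
  have hCa : C = (2 / π * a) ^ 2 := by
    have habs : a ^ 2 = (2 / 2 ^ α * (1 - α)) ^ 2 * τ ^ 2 := by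
      rw [ha, h2α', ← sq_abs τ]
      ring
    rw [hCdef, mul_pow, habs]
    field_simp
    ring
  have hC0 : 0 ≤ C := by positivity
  -- partial sums of j^{-2α}
  set g : ℕ → ℝ := fun m => ∑ j ∈ Finset.Icc 1 m, (j : ℝ) ^ (-(2 * α)) with hg
  have hg0 : ∀ m, 0 ≤ g m := fun m =>
    Finset.sum_nonneg fun j _ => Real.rpow_nonneg (by positivity) _
  have hexp_ne : -(2 * α) ≠ 0 := by intro h; linarith
  -- zeta value as a real tsum
  have hsum : Summable (fun n : ℕ => (n : ℝ) ^ (-(2 * α))) :=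
    Real.summable_nat_rpow.2 (by linarith)
  set Z : ℝ := ∑' n : ℕ, (n : ℝ) ^ (-(2 * α)) with hZ
  have hzeta : (riemannZeta (2 * α)).re = Z := by
    have hz := zeta_eq_tsum_one_div_nat_cpow (s := ((2 * α : ℝ) : ℂ))
      (by rw [Complex.ofReal_re]; linarith)
    have key : riemannZeta ((2 * α : ℝ) : ℂ) = ((Z : ℝ) : ℂ) := by
      rw [hz, hZ, Complex.ofReal_tsum]
      refine tsum_congr fun n => ?_
      rw [Complex.ofReal_cpow (by positivity : (0:ℝ) ≤ (n : ℝ))]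
      push_cast
      rw [Complex.cpow_neg, one_div]
    have hc : ((2 * α : ℝ) : ℂ) = 2 * (α : ℂ) := by push_cast; ring
    rw [← hc, key, Complex.ofReal_re]
  -- g tends to Z
  have hgZ : Tendsto g atTop (nhds Z) := by
    have h0 : Tendsto (fun m => ∑ j ∈ Finset.range m, (j : ℝ) ^ (-(2 * α))) atTop (nhds Z) :=
      hsum.hasSum.tendsto_sum_nat
    have hge : g = fun m => ∑ j ∈ Finset.range (m + 1), (j : ℝ) ^ (-(2 * α)) := by
      funext m
      simp only [hg]
      refine Finset.sum_subset (fun j hj => ?_) (fun j hj hnot => ?_)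
      · simp only [Finset.mem_Icc] at hj
        exact Finset.mem_range.2 (by omega)
      · have hj0 : j = 0 := by
          simp only [Finset.mem_range] at hj
          simp only [Finset.mem_Icc, not_and, not_le] at hnot
          omega
        rw [hj0, Nat.cast_zero, Real.zero_rpow hexp_ne]
    rw [hge]
    exact h0.comp (tendsto_add_atTop_nat 1)
  -- key bound for each m
  have key : ∀ m : ℕ,
      Filter.limsup (fun N : ℕ => relaxProd α N (τ * (N : ℝ) ^ (1 - α))) Filter.atTop ≤
        Real.exp (-(C * g m)) := by
    intro m
    refine Filter.limsup_le_of_le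
      (Filter.isCoboundedUnder_le_of_le atTop (x := 0)
        (fun N => relaxProd_nonneg α N _)) ?_
    -- the eventual estimate
    have hc : 0 < (π / 2) * (2 ^ (α - 1) : ℝ) - |τ| * (1 - α) := by
      have h2a1 : (2:ℝ) ^ (α - 1) = ((2:ℝ) ^ (1 - α))⁻¹ := by
        rw [← Real.rpow_neg (by norm_num : (0:ℝ) ≤ 2)]
        ring_nf
      rw [h2a1, sub_pos, ← div_eq_mul_inv]
      rw [lt_div_iff₀ (Real.rpow_pos_of_pos two_pos _)]
      calc |τ| * (1 - α) * 2 ^ (1 - α) = 2 ^ (1 - α) * (1 - α) * |τ| := by ring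
        _ < π / 2 := hτ
    have hNinf : Tendsto (fun N : ℕ => (N : ℝ) ^ (1 - α)) atTop atTop :=
      (tendsto_rpow_atTop h1α).comp tendsto_natCast_atTop_atTop
    have hstar : ∀ᶠ N : ℕ in atTop,
        π / 2 ≤ ((π / 2) * (2 ^ (α - 1) : ℝ) - |τ| * (1 - α)) * (N : ℝ) ^ (1 - α) :=
      (hNinf.const_mul_atTop hc).eventually_ge_atTop (π / 2)
    filter_upwards [eventually_ge_atTop 2, eventually_ge_atTop (2 * m), hstar]
      with N hN2 hNm hstarN
    -- setup
    set t : ℝ := τ * (N : ℝ) ^ (1 - α) with ht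
    set M : ℕ := N / 2 with hM
    have hM1 : 1 ≤ M := by omega
    have hmM : m ≤ M := by omega
    have hMN : 2 * (M : ℝ) ≤ (N : ℝ) := by
      have h : 2 * M ≤ N := by omega
      exact_mod_cast h
    have hNM1 : (N : ℝ) ≤ 2 * (M : ℝ) + 2 := by
      have h : N ≤ 2 * M + 2 := by omega
      exact_mod_cast h
    set S : ℝ := ∑ j ∈ Finset.Icc 1 M, (j : ℝ) ^ (-α) with hS
    have hS1 : 1 ≤ S := by
      have h1mem : 1 ∈ Finset.Icc 1 M := Finset.mem_Icc.2 ⟨le_refl _, hM1⟩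
      have h := Finset.single_le_sum
        (f := fun j : ℕ => (j : ℝ) ^ (-α))
        (fun j _ => Real.rpow_nonneg (by positivity) _) h1mem
      rw [← hS] at h
      simpa using h
    have hS0 : 0 < S := by linarith
    -- lower bound on S
    have hSlb : (((M : ℝ) + 1) ^ (1 - α) - 1) / (1 - α) ≤ S := by
      have hanti := antitoneOn_rpow_neg α hα0' ((M : ℝ) + 1)
      have h := AntitoneOn.integral_le_sum_Ico (a := 1) (b := M + 1)
        (f := fun x : ℝ => x ^ (-α)) (by omega) (by simpa using hanti)
      have hint : ∫ x in ((1:ℕ):ℝ)..((M + 1 : ℕ) : ℝ), x ^ (-α)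
          = (((M : ℝ) + 1) ^ (1 - α) - 1) / (1 - α) := by
        rw [integral_rpow (Or.inl (by linarith : (-1:ℝ) < -α))]
        rw [show -α + 1 = 1 - α by ring]
        push_cast
        rw [Real.one_rpow]
      rw [hint] at h
      calc (((M : ℝ) + 1) ^ (1 - α) - 1) / (1 - α)
          ≤ ∑ x ∈ Finset.Ico 1 (M + 1), ((x : ℕ) : ℝ) ^ (-α) := h
        _ = S := by rw [hS, Finset.Ico_add_one_right_eq_Icc]
    -- upper bound on S
    have hSub : S ≤ (M : ℝ) ^ (1 - α) / (1 - α) := by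
      have hanti := antitoneOn_rpow_neg α hα0' (M : ℝ)
      have h := AntitoneOn.sum_le_integral_Ico (a := 1) (b := M)
        (f := fun x : ℝ => x ^ (-α)) hM1 (by simpa using hanti)
      have hint : ∫ x in ((1:ℕ):ℝ)..((M:ℕ) : ℝ), x ^ (-α)
          = ((M : ℝ) ^ (1 - α) - 1) / (1 - α) := by
        rw [integral_rpow (Or.inl (by linarith : (-1:ℝ) < -α))]
        rw [show -α + 1 = 1 - α by ring]
        push_cast
        rw [Real.one_rpow]
      rw [hint] at h
      have hsplit : S = 1 + ∑ j ∈ Finset.Ico 2 (M + 1), (j : ℝ) ^ (-α) := by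
        rw [hS, ← Finset.Ico_add_one_right_eq_Icc, Finset.sum_eq_sum_Ico_succ_bot (by omega : 1 < M + 1)]
        norm_num
      have hreidx : ∑ j ∈ Finset.Ico 2 (M + 1), (j : ℝ) ^ (-α)
          = ∑ i ∈ Finset.Ico 1 M, ((i + 1 : ℕ) : ℝ) ^ (-α) := by
        rw [Finset.sum_Ico_eq_sum_range, Finset.sum_Ico_eq_sum_range]
        rw [show M + 1 - 2 = M - 1 by omega]
        refine Finset.sum_congr rfl fun i _ => ?_
        congr 1
        push_cast
        ring
      rw [hsplit, hreidx]
      have hfin : ((M : ℝ) ^ (1 - α) - 1) / (1 - α) + 1 ≤ (M : ℝ) ^ (1 - α) / (1 - α) := by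
        rw [div_add' _ _ _ (by linarith : (1:ℝ) - α ≠ 0),
          div_le_div_iff₀ (by linarith) (by linarith)]
        nlinarith
      linarith
    have habs_t : |t| = |τ| * (N : ℝ) ^ (1 - α) := by
      rw [ht, abs_mul, abs_of_nonneg (Real.rpow_nonneg (by positivity) _)]
    -- |t| ≤ (π/2) * S
    have htS : |t| ≤ π / 2 * S := by
      have hN2r : ((N : ℝ) / 2) ^ (1 - α) = 2 ^ (α - 1) * (N : ℝ) ^ (1 - α) := by
        rw [Real.div_rpow (by positivity) (by norm_num)]
        rw [show (α - 1 : ℝ) = -(1 - α) by ring, Real.rpow_neg (by norm_num : (0:ℝ) ≤ 2)]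
        ring
      have hstep1 : |τ| * (1 - α) * (N : ℝ) ^ (1 - α) + π / 2
          ≤ π / 2 * ((N : ℝ) / 2) ^ (1 - α) := by
        rw [hN2r]
        linarith [hstarN]
      have hmono : ((N : ℝ) / 2) ^ (1 - α) ≤ ((M : ℝ) + 1) ^ (1 - α) :=
        Real.rpow_le_rpow (by positivity) (by linarith) (by linarith)
      have hstep2 : ((M : ℝ) + 1) ^ (1 - α) - 1 ≤ (1 - α) * S := by
        have h := (div_le_iff₀ h1α).1 hSlb
        linarith
      have hA : |τ| * (1 - α) * (N : ℝ) ^ (1 - α) + π / 2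
          ≤ π / 2 * ((M : ℝ) + 1) ^ (1 - α) := by
        have h := mul_le_mul_of_nonneg_left hmono (by positivity : (0:ℝ) ≤ π / 2)
        linarith
      have hB : π / 2 * ((M : ℝ) + 1) ^ (1 - α) ≤ π / 2 * ((1 - α) * S + 1) := by
        apply mul_le_mul_of_nonneg_left _ (by positivity : (0:ℝ) ≤ π / 2)
        linarith
      rw [habs_t]
      have h1 : |τ| * (N : ℝ) ^ (1 - α) * (1 - α) ≤ π / 2 * S * (1 - α) := by
        linarith [hA, hB]
      exact le_of_mul_le_mul_right h1 h1α
    -- a * S ≤ |t|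
    have haS : a * S ≤ |t| := by
      have key1 : (1 - α) * S ≤ (M : ℝ) ^ (1 - α) := by
        have h := (le_div_iff₀ h1α).1 hSub
        linarith
      have key2 : 2 ^ (1 - α) * (M : ℝ) ^ (1 - α) ≤ (N : ℝ) ^ (1 - α) := by
        calc 2 ^ (1 - α) * (M : ℝ) ^ (1 - α) = (2 * (M : ℝ)) ^ (1 - α) := by
              rw [Real.mul_rpow (by norm_num) (by positivity)]
          _ ≤ (N : ℝ) ^ (1 - α) := Real.rpow_le_rpow (by positivity) hMN (by linarith)
      have h2p : (0:ℝ) < 2 ^ (1 - α) := Real.rpow_pos_of_pos two_pos _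
      rw [habs_t, ha]
      calc 2 ^ (1 - α) * (1 - α) * |τ| * S = |τ| * (2 ^ (1 - α) * ((1 - α) * S)) := by ring
        _ ≤ |τ| * (2 ^ (1 - α) * (M : ℝ) ^ (1 - α)) := by
            have h := mul_le_mul_of_nonneg_left key1 (le_of_lt h2p)
            exact mul_le_mul_of_nonneg_left h (abs_nonneg τ)
        _ ≤ |τ| * (N : ℝ) ^ (1 - α) := mul_le_mul_of_nonneg_left key2 (abs_nonneg τ)
    -- rewrite relaxProd
    have hkac : 2 * kacNorm α N = S⁻¹ := by
      rw [kacNorm, ← hM, ← hS, mul_inv, ← mul_assoc]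
      norm_num
    have hrelax : relaxProd α N t
        = ∏ j ∈ Finset.Icc 1 M, Real.cos (S⁻¹ * t * (j : ℝ) ^ (-α)) ^ 2 := by
      rw [relaxProd, ← hM]
      exact Finset.prod_congr rfl fun j _ => by rw [hkac]
    -- per-term angle bound
    have hangle : ∀ j ∈ Finset.Icc 1 M, |S⁻¹ * t * (j : ℝ) ^ (-α)| ≤ π / 2 := by
      intro j hj
      have hj1 : 1 ≤ (j : ℝ) := by exact_mod_cast (Finset.mem_Icc.1 hj).1
      have hjp : 0 ≤ (j : ℝ) ^ (-α) := Real.rpow_nonneg (by linarith) _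
      have hjle : (j : ℝ) ^ (-α) ≤ 1 :=
        Real.rpow_le_one_of_one_le_of_nonpos hj1 (by linarith)
      rw [abs_mul, abs_mul, abs_inv, abs_of_pos hS0, abs_of_nonneg hjp]
      calc S⁻¹ * |t| * (j : ℝ) ^ (-α) ≤ S⁻¹ * |t| * 1 := by
            apply mul_le_mul_of_nonneg_left hjle
            positivity
        _ = |t| / S := by ring
        _ ≤ π / 2 := by
            rw [div_le_iff₀ hS0]
            linarith [htS]
    -- the product estimate
    have hprod : relaxProd α N t
        ≤ Real.exp (∑ j ∈ Finset.Icc 1 M, -(2 / π * (S⁻¹ * t * (j : ℝ) ^ (-α))) ^ 2) := by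
      rw [hrelax, Real.exp_sum]
      exact Finset.prod_le_prod (fun j _ => sq_nonneg _)
        (fun j hj => cos_sq_le_exp_aux (hangle j hj))
    -- simplify the sum
    have hsum_eq : ∑ j ∈ Finset.Icc 1 M, -(2 / π * (S⁻¹ * t * (j : ℝ) ^ (-α))) ^ 2
        = -((2 / π * (S⁻¹ * |t|)) ^ 2 * g M) := by
      simp only [hg]
      rw [Finset.mul_sum, ← Finset.sum_neg_distrib]
      refine Finset.sum_congr rfl fun j hj => ?_
      have hj0 : (0:ℝ) ≤ (j : ℝ) := by positivity
      rw [← rpow_sq_aux α hj0]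
      have h2 : (2 / π * (S⁻¹ * |t|)) ^ 2 = (2 / π * (S⁻¹ * t)) ^ 2 := by
        rw [mul_pow, mul_pow, mul_pow, mul_pow, sq_abs]
      rw [h2]
      ring
    -- compare exponents
    have hfinal : C * g m ≤ (2 / π * (S⁻¹ * |t|)) ^ 2 * g M := by
      have hgmM : g m ≤ g M := by
        simp only [hg]
        exact Finset.sum_le_sum_of_subset_of_nonneg
          (Finset.Icc_subset_Icc_right hmM)
          (fun j _ _ => Real.rpow_nonneg (by positivity) _)
      have hCD : C ≤ (2 / π * (S⁻¹ * |t|)) ^ 2 := by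
        rw [hCa]
        apply pow_le_pow_left₀ (by positivity)
        have hsa : a ≤ S⁻¹ * |t| := by
          rw [inv_mul_eq_div, le_div_iff₀ hS0]
          linarith [haS]
        apply mul_le_mul_of_nonneg_left hsa (by positivity)
      calc C * g m ≤ C * g M := mul_le_mul_of_nonneg_left hgmM hC0
        _ ≤ (2 / π * (S⁻¹ * |t|)) ^ 2 * g M :=
            mul_le_mul_of_nonneg_right hCD (hg0 M)
    calc relaxProd α N t
        ≤ Real.exp (∑ j ∈ Finset.Icc 1 M, -(2 / π * (S⁻¹ * t * (j : ℝ) ^ (-α))) ^ 2) := hprod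
      _ = Real.exp (-((2 / π * (S⁻¹ * |t|)) ^ 2 * g M)) := by rw [hsum_eq]
      _ ≤ Real.exp (-(C * g m)) := Real.exp_le_exp.2 (by linarith [hfinal])
  -- pass to the limit m → ∞
  have hconv : Tendsto (fun m : ℕ => Real.exp (-(C * g m))) atTop
      (nhds (Real.exp (-(C * Z)))) := by
    have h : Tendsto (fun m : ℕ => -(C * g m)) atTop (nhds (-(C * Z))) :=
      (hgZ.const_mul C).neg
    exact (Real.continuous_exp.tendsto _).comp h
  have hlim := ge_of_tendsto' hconv key
  calc Filter.limsup (fun N : ℕ => relaxProd α N (τ * (N : ℝ) ^ (1 - α))) Filter.atTop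
      ≤ Real.exp (-(C * Z)) := hlim
    _ = Real.exp (-(4 * (1 - α) / (2 ^ α * π)) ^ 2 * (riemannZeta (2 * α)).re * τ ^ 2) := by
        rw [hzeta, hCdef]
        congr 1
        ring
end

section
/- (Gaussian collapse in rescaled time, mean-field regime.) Fix 0 ≤ α < 1/2 and τ ∈ ℝ. Then lim_{N→∞} P_{N,α}(τ √N) = exp(−2(1−α)² τ² / (1−2α)). In particular, in rescaled time τ = t N^{−1/2} the expectation value ⟨A⟩ relaxes to the equilibrium value 0 with an N-independent Gaussian profile. -/
/-!
Write `c_N = 2 𝒩_α(N) τ √N`, so that `P_{N,α}(τ √N) = ∏_{j ≤ N/2} cos² (c_N j^{-α})`.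
Since `log cos² x = -x² + O(x⁴)` near `0`, the product is `exp (-Q_N + O(c_N² Q_N))` with
`Q_N = c_N² ∑_{j ≤ N/2} j^{-2α}`. Comparing with integrals, `∑_{j ≤ M} j^{-β} ~ M^{1-β} / (1-β)`
for `0 ≤ β < 1`; with `M = ⌊N/2⌋` and `β = α, 2α` this gives
`Q_N → 2 (1-α)² τ² / (1-2α)`, and `c_N² = O(M^{2α-1}) → 0` because `α < 1/2`.
-/

open Filter Finset Real Topology

lemma abs_two_mul_log_cos_add_sq_le {x : ℝ} (hx : x ^ 2 ≤ 1 / 4) :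
    |2 * log (cos x) + x ^ 2| ≤ 2 * x ^ 4 := by
  have hcos := abs_le.1 (cos_bound ((sq_le_one_iff_abs_le_one x).1 (by linarith)))
  rw [← abs_pow, abs_of_nonneg (by positivity)] at hcos
  have hpos : 0 < cos x := by nlinarith [sq_nonneg x]
  have hup := log_le_sub_one_of_pos hpos
  have hlo := one_sub_inv_le_log_of_pos hpos
  have hinv : (cos x)⁻¹ ≤ 1 + x ^ 2 / 2 + x ^ 4 := by
    have hx4 : x ^ 4 ≤ 1 / 16 := by nlinarith [sq_nonneg x]
    rw [inv_le_iff_one_le_mul₀ hpos]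
    nlinarith [sq_nonneg x, sq_nonneg (x ^ 2)]
  rw [abs_le]
  constructor <;> nlinarith [sq_nonneg x, sq_nonneg (x ^ 2)]

theorem tendsto_prod_cos_sq_of_tendsto_sum_sq {ι κ : Type*} {l : Filter κ} {s : κ → Finset ι}
    {x : κ → ι → ℝ} {δ : κ → ℝ} {L : ℝ} (hδ : Tendsto δ l (𝓝 0))
    (hx : ∀ᶠ k in l, ∀ i ∈ s k, x k i ^ 2 ≤ δ k)
    (hsum : Tendsto (fun k ↦ ∑ i ∈ s k, x k i ^ 2) l (𝓝 L)) :
    Tendsto (fun k ↦ ∏ i ∈ s k, cos (x k i) ^ 2) l (𝓝 (exp (-L))) := by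
  have hsmall : ∀ᶠ k in l, ∀ i ∈ s k, x k i ^ 2 ≤ δ k ∧ x k i ^ 2 ≤ 1 / 4 := by
    filter_upwards [hx, hδ.eventually_le_const (by norm_num : (0 : ℝ) < 1 / 4)]
      with k hk hδk i hi
    exact ⟨hk i hi, (hk i hi).trans hδk⟩
  have herr : Tendsto (fun k ↦ ∑ i ∈ s k, (2 * log (cos (x k i)) + x k i ^ 2)) l (𝓝 0) := by
    have hbound : Tendsto (fun k ↦ 2 * δ k * ∑ i ∈ s k, x k i ^ 2) l (𝓝 0) := by
      simpa using (hδ.const_mul 2).mul hsum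
    refine squeeze_zero_norm' ?_ hbound
    filter_upwards [hsmall] with k hk
    rw [mul_sum]
    refine (norm_sum_le _ _).trans (sum_le_sum fun i hi ↦ ?_)
    obtain ⟨hxδ, hx4⟩ := hk i hi
    calc ‖2 * log (cos (x k i)) + x k i ^ 2‖ ≤ 2 * x k i ^ 2 * x k i ^ 2 := by
          rw [norm_eq_abs]; linarith [abs_two_mul_log_cos_add_sq_le hx4]
      _ ≤ 2 * δ k * x k i ^ 2 := by gcongr
  have hlog : Tendsto (fun k ↦ ∑ i ∈ s k, 2 * log (cos (x k i))) l (𝓝 (-L)) := by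
    simpa [sum_add_distrib] using herr.sub hsum
  refine ((continuous_exp.tendsto _).comp hlog).congr' ?_
  filter_upwards [hsmall] with k hk
  rw [Function.comp_apply, exp_sum]
  refine prod_congr rfl fun i hi ↦ ?_
  have hpos : 0 < cos (x k i) :=
    cos_pos_of_le_one ((sq_le_one_iff_abs_le_one _).1 (by linarith [(hk i hi).2]))
  rw [two_mul, exp_add, exp_log hpos, sq]

lemma integral_one_rpow_neg {β : ℝ} (hβ : β < 1) (b : ℝ) :
    ∫ x in (1 : ℝ)..b, x ^ (-β) = (b ^ (1 - β) - 1) / (1 - β) := by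
  rw [integral_rpow (Or.inl (by linarith)), one_rpow, neg_add_eq_sub]

lemma sub_one_div_le_sum_Icc_rpow_neg {β : ℝ} (h0 : 0 ≤ β) (h1 : β < 1) (M : ℕ) :
    ((M : ℝ) ^ (1 - β) - 1) / (1 - β) ≤ ∑ j ∈ Icc 1 M, (j : ℝ) ^ (-β) := by
  have hint := AntitoneOn.integral_le_sum_Ico (a := 1) (b := M + 1) (by omega)
    ((antitoneOn_rpow_Ioi_of_exponent_nonpos (neg_nonpos.2 h0)).mono
      fun _ hx ↦ zero_lt_one.trans_le (by exact_mod_cast hx.1))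
  rw [Nat.cast_one, integral_one_rpow_neg h1, Ico_add_one_right_eq_Icc] at hint
  refine le_trans ?_ hint
  gcongr
  linarith

lemma sum_Icc_rpow_neg_le {β : ℝ} (h0 : 0 ≤ β) (h1 : β < 1) (M : ℕ) :
    ∑ j ∈ Icc 1 M, (j : ℝ) ^ (-β) ≤ (M : ℝ) ^ (1 - β) / (1 - β) := by
  rcases Nat.eq_zero_or_pos M with rfl | hM
  · simp [zero_rpow (by linarith : 1 - β ≠ 0)]
  have hint := AntitoneOn.sum_le_integral_Ico (a := 1) (b := M) hM
    ((antitoneOn_rpow_Ioi_of_exponent_nonpos (neg_nonpos.2 h0)).mono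
      fun _ hx ↦ zero_lt_one.trans_le (by exact_mod_cast hx.1))
  rw [Nat.cast_one, integral_one_rpow_neg h1] at hint
  have hsplit :
      ∑ j ∈ Icc 1 M, (j : ℝ) ^ (-β) = 1 + ∑ i ∈ Ico 1 M, ((i + 1 : ℕ) : ℝ) ^ (-β) := by
    rw [← Ico_add_one_right_eq_Icc, sum_eq_sum_Ico_succ_bot (by omega), Nat.cast_one,
      one_rpow]
    exact congrArg _ (sum_Ico_add' (fun k : ℕ ↦ (k : ℝ) ^ (-β)) 1 M 1).symm
  have hβ : 1 ≤ 1 / (1 - β) := by rw [le_div_iff₀ (by linarith)]; linarith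
  rw [sub_div] at hint
  rw [hsplit]
  linarith

lemma tendsto_sum_Icc_rpow_neg_div_rpow {β : ℝ} (h0 : 0 ≤ β) (h1 : β < 1) :
    Tendsto (fun M : ℕ ↦ (∑ j ∈ Icc 1 M, (j : ℝ) ^ (-β)) / (M : ℝ) ^ (1 - β)) atTop
      (𝓝 (1 - β)⁻¹) := by
  have hpow : Tendsto (fun M : ℕ ↦ (M : ℝ) ^ (1 - β)) atTop atTop :=
    (tendsto_rpow_atTop (by linarith)).comp tendsto_natCast_atTop_atTop
  have hlower : Tendsto (fun M : ℕ ↦ (1 - β)⁻¹ - (1 - β)⁻¹ * ((M : ℝ) ^ (1 - β))⁻¹) atTop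
      (𝓝 (1 - β)⁻¹) := by
    simpa using tendsto_const_nhds.sub (hpow.inv_tendsto_atTop.const_mul (1 - β)⁻¹)
  refine tendsto_of_tendsto_of_tendsto_of_le_of_le' hlower tendsto_const_nhds ?_ ?_
  all_goals
    filter_upwards [hpow.eventually_gt_atTop 0] with M hM
  · calc (1 - β)⁻¹ - (1 - β)⁻¹ * ((M : ℝ) ^ (1 - β))⁻¹
        = ((M : ℝ) ^ (1 - β) - 1) / (1 - β) / (M : ℝ) ^ (1 - β) := by field_simp
      _ ≤ _ := by gcongr; exact sub_one_div_le_sum_Icc_rpow_neg h0 h1 M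
  · rw [div_le_iff₀ hM, inv_mul_eq_div]
    exact sum_Icc_rpow_neg_le h0 h1 M

lemma tendsto_natCast_div_natCast_div_two :
    Tendsto (fun N : ℕ ↦ (N : ℝ) / (N / 2 : ℕ)) atTop (𝓝 2) := by
  have h := (tendsto_nat_floor_mul_div_atTop (R := ℝ) (a := 2⁻¹) (by norm_num)).comp
    tendsto_natCast_atTop_atTop
  have h' := h.inv₀ (by norm_num)
  rw [inv_inv] at h'
  refine h'.congr fun N ↦ ?_
  simp only [Function.comp_apply, inv_div]
  rw [inv_mul_eq_div, ← Nat.cast_ofNat, Nat.floor_div_eq_div]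

lemma sq_two_mul_kacNorm_mul_sqrt_mul_rpow (α τ : ℝ) {N : ℕ} (hN : 2 ≤ N) :
    (2 * kacNorm α N * (τ * √N)) ^ 2 * ((N / 2 : ℕ) : ℝ) ^ (1 - 2 * α) =
      τ ^ 2 * (N / (N / 2 : ℕ)) /
        ((∑ j ∈ Icc 1 (N / 2), (j : ℝ) ^ (-α)) / ((N / 2 : ℕ) : ℝ) ^ (1 - α)) ^ 2 := by
  have hM : (0 : ℝ) < (N / 2 : ℕ) := by exact_mod_cast (by omega : 0 < N / 2)
  have hS : 0 < ∑ j ∈ Icc 1 (N / 2), (j : ℝ) ^ (-α) :=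
    sum_pos (fun j hj ↦ rpow_pos_of_pos (by exact_mod_cast (mem_Icc.1 hj).1) _)
      ⟨1, mem_Icc.2 ⟨le_rfl, by omega⟩⟩
  have hpow : (((N / 2 : ℕ) : ℝ) ^ (1 - α)) ^ 2 =
      (N / 2 : ℕ) * ((N / 2 : ℕ) : ℝ) ^ (1 - 2 * α) := by
    rw [← rpow_natCast, ← rpow_mul hM.le, mul_comm ((N / 2 : ℕ) : ℝ), ← rpow_add_one hM.ne']
    ring_nf
  rw [kacNorm, mul_pow, mul_pow, mul_pow, sq_sqrt (Nat.cast_nonneg N), div_pow, hpow]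
  field_simp

lemma tendsto_sq_two_mul_kacNorm_mul_sqrt_mul_rpow {α : ℝ} (hα0 : 0 ≤ α) (hα1 : α < 1) (τ : ℝ) :
    Tendsto (fun N : ℕ ↦ (2 * kacNorm α N * (τ * √N)) ^ 2 * ((N / 2 : ℕ) : ℝ) ^ (1 - 2 * α))
      atTop (𝓝 (2 * (1 - α) ^ 2 * τ ^ 2)) := by
  have hS := (tendsto_sum_Icc_rpow_neg_div_rpow hα0 hα1).comp
    (Nat.tendsto_div_const_atTop two_ne_zero)
  have h := (tendsto_natCast_div_natCast_div_two.const_mul (τ ^ 2)).div (hS.pow 2)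
    (pow_ne_zero _ (inv_ne_zero (by linarith)))
  rw [inv_pow, div_inv_eq_mul,
    show τ ^ 2 * 2 * (1 - α) ^ 2 = 2 * (1 - α) ^ 2 * τ ^ 2 by ring] at h
  refine h.congr' ?_
  filter_upwards [eventually_ge_atTop 2] with N hN
  exact (sq_two_mul_kacNorm_mul_sqrt_mul_rpow α τ hN).symm

lemma tendsto_sq_two_mul_kacNorm_mul_sqrt {α : ℝ} (hα0 : 0 ≤ α) (hα1 : α < 1 / 2) (τ : ℝ) :
    Tendsto (fun N : ℕ ↦ (2 * kacNorm α N * (τ * √N)) ^ 2) atTop (𝓝 0) := by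
  have hpow : Tendsto (fun N : ℕ ↦ ((N / 2 : ℕ) : ℝ) ^ (1 - 2 * α)) atTop atTop :=
    (tendsto_rpow_atTop (by linarith)).comp
      (tendsto_natCast_atTop_atTop.comp (Nat.tendsto_div_const_atTop two_ne_zero))
  refine ((tendsto_sq_two_mul_kacNorm_mul_sqrt_mul_rpow hα0 (by linarith) τ).div_atTop
    hpow).congr' ?_
  filter_upwards [hpow.eventually_gt_atTop 0] with N hN
  exact mul_div_cancel_right₀ _ hN.ne'

lemma tendsto_sum_sq_two_mul_kacNorm_mul_sqrt {α : ℝ} (hα0 : 0 ≤ α) (hα1 : α < 1 / 2) (τ : ℝ) :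
    Tendsto (fun N : ℕ ↦ ∑ j ∈ Icc 1 (N / 2), (2 * kacNorm α N * (τ * √N) * (j : ℝ) ^ (-α)) ^ 2)
      atTop (𝓝 (2 * (1 - α) ^ 2 * τ ^ 2 / (1 - 2 * α))) := by
  have hT := (tendsto_sum_Icc_rpow_neg_div_rpow (by linarith : 0 ≤ 2 * α) (by linarith)).comp
    (Nat.tendsto_div_const_atTop two_ne_zero)
  rw [div_eq_mul_inv]
  refine ((tendsto_sq_two_mul_kacNorm_mul_sqrt_mul_rpow hα0 (by linarith) τ).mul hT).congr' ?_
  filter_upwards [eventually_ge_atTop 2] with N hN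
  have hM : (0 : ℝ) < ((N / 2 : ℕ) : ℝ) ^ (1 - 2 * α) :=
    rpow_pos_of_pos (by exact_mod_cast (by omega : 0 < N / 2)) _
  set c := 2 * kacNorm α N * (τ * √N)
  calc c ^ 2 * ((N / 2 : ℕ) : ℝ) ^ (1 - 2 * α) *
        ((∑ j ∈ Icc 1 (N / 2), (j : ℝ) ^ (-(2 * α))) / ((N / 2 : ℕ) : ℝ) ^ (1 - 2 * α))
      = c ^ 2 * ∑ j ∈ Icc 1 (N / 2), (j : ℝ) ^ (-(2 * α)) := by field_simp
    _ = _ := by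
      rw [mul_sum]
      refine sum_congr rfl fun j _ ↦ ?_
      rw [mul_pow c, ← rpow_natCast ((j : ℝ) ^ (-α)), ← rpow_mul (Nat.cast_nonneg j)]
      ring_nf

/-- Gaussian collapse in rescaled time, mean-field regime: for `0 ≤ α < 1/2`,
`P_{N,α}(τ √N) → exp(−2(1−α)² τ² / (1−2α))` as `N → ∞`. -/
theorem stmt_9 (α : ℝ) (hα0 : 0 ≤ α) (hα1 : α < 1 / 2) (τ : ℝ) :
    Filter.Tendsto (fun N : ℕ => relaxProd α N (τ * Real.sqrt N)) Filter.atTop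
      (nhds (Real.exp (-2 * (1 - α) ^ 2 * τ ^ 2 / (1 - 2 * α)))) := by
  have hbound : ∀ N : ℕ, ∀ j ∈ Icc 1 (N / 2),
      (2 * kacNorm α N * (τ * √N) * (j : ℝ) ^ (-α)) ^ 2 ≤ (2 * kacNorm α N * (τ * √N)) ^ 2 := by
    intro N j hj
    have hj : (1 : ℝ) ≤ j := by exact_mod_cast (mem_Icc.1 hj).1
    rw [mul_pow]
    refine mul_le_of_le_one_right (sq_nonneg _) (pow_le_one₀ (by positivity) ?_)
    exact rpow_le_one_of_one_le_of_nonpos hj (neg_nonpos.2 hα0)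
  have h := tendsto_prod_cos_sq_of_tendsto_sum_sq (tendsto_sq_two_mul_kacNorm_mul_sqrt hα0 hα1 τ)
    (Eventually.of_forall hbound) (tendsto_sum_sq_two_mul_kacNorm_mul_sqrt hα0 hα1 τ)
  rwa [← neg_div, ← neg_mul, ← neg_mul] at h
end

section
/- (Collapse in rescaled time, intermediate regime.) Fix 1/2 < α < 1 and τ ∈ ℝ. Then lim_{N→∞} P_{N,α}(τ N^{1−α}) = ∏_{j=1}^{∞} cos²(2^{1−α}(1−α) τ / j^α), where the infinite product on the right converges. -/
/-!
Write `u j = (j + 1)^(-α)`. Then `P_{N,α}(τ N^{1-α}) = ∏_{j < ⌊N/2⌋} cos²(c_N u j)` with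
`c_N = 2 𝒩_α(N) τ N^{1-α}`. Comparing `∑_{j ≤ M} j^(-α)` with `∫₁ x^(-α)` gives
`∑_{j ≤ M} j^(-α) ~ M^(1-α) / (1 - α)`, hence `c_N → c = 2^(1-α) (1-α) τ`.
Since `|cos² a - cos² b| ≤ |a² - b²|` and a difference of products of factors in `[-1, 1]` is
bounded by the sum of the differences of the factors, the partial products for `c_N` and for `c`
differ by at most `|c_N² - c²| ∑ u j²`, which tends to `0` because `2α > 1`. The same
summability makes `∏ cos²(c u j) = ∏ (1 - sin²(c u j))` converge.
-/

open Real Filter Finset Topology Asymptotics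

@[to_additive sum_Icc_one_eq_sum_range]
theorem Finset.prod_Icc_one_eq_prod_range {M : Type*} [CommMonoid M] (f : ℕ → M) (n : ℕ) :
    ∏ j ∈ Icc 1 n, f j = ∏ i ∈ range n, f (i + 1) := by
  rw [range_eq_Ico, prod_Ico_add', zero_add, Ico_add_one_right_eq_Icc]

theorem Finset.norm_prod_sub_prod_le_sum_norm_sub {ι R : Type*} [NormedCommRing R]
    [NormOneClass R] (s : Finset ι) {f g : ι → R} (hf : ∀ i ∈ s, ‖f i‖ ≤ 1)
    (hg : ∀ i ∈ s, ‖g i‖ ≤ 1) :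
    ‖∏ i ∈ s, f i - ∏ i ∈ s, g i‖ ≤ ∑ i ∈ s, ‖f i - g i‖ := by
  classical
  induction s using Finset.induction_on with
  | empty => simp
  | insert a s ha ih =>
    simp only [forall_mem_insert] at hf hg
    rw [prod_insert ha, prod_insert ha, sum_insert ha]
    have hgs : ‖∏ i ∈ s, g i‖ ≤ 1 :=
      (norm_prod_le _ _).trans (prod_le_one (fun _ _ => norm_nonneg _) hg.2)
    calc ‖f a * ∏ i ∈ s, f i - g a * ∏ i ∈ s, g i‖
        = ‖f a * (∏ i ∈ s, f i - ∏ i ∈ s, g i) + (f a - g a) * ∏ i ∈ s, g i‖ := by ring_nf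
      _ ≤ 1 * ∑ i ∈ s, ‖f i - g i‖ + ‖f a - g a‖ * 1 := by
        refine (norm_add_le _ _).trans (add_le_add ?_ ?_) <;> refine (norm_mul_le _ _).trans ?_
        · exact mul_le_mul hf.1 (ih hf.2 hg.2) (norm_nonneg _) zero_le_one
        · exact mul_le_mul_of_nonneg_left hgs (norm_nonneg _)
      _ = _ := by ring

theorem abs_cos_sq_sub_cos_sq_le (x y : ℝ) : |cos x ^ 2 - cos y ^ 2| ≤ |x ^ 2 - y ^ 2| := by
  have h : cos x ^ 2 - cos y ^ 2 = sin (y + x) * sin (y - x) := by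
    rw [sin_add, sin_sub]; nlinarith [sin_sq_add_cos_sq x, sin_sq_add_cos_sq y]
  rw [h, abs_mul, show x ^ 2 - y ^ 2 = (y + x) * -(y - x) by ring, abs_mul, abs_neg]
  exact mul_le_mul abs_sin_le_abs abs_sin_le_abs (abs_nonneg _) (abs_nonneg _)

theorem multipliable_cos_sq_of_summable_sq {ι : Type*} {f : ι → ℝ}
    (hf : Summable fun i => f i ^ 2) : Multipliable fun i => cos (f i) ^ 2 := by
  have hsin : Summable fun i => -sin (f i) ^ 2 :=
    (hf.of_nonneg_of_le (fun i => sq_nonneg _) fun i => sin_sq_le_sq).neg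
  convert Real.multipliable_one_add_of_summable hsin using 2 with i
  rw [cos_sq', sub_eq_add_neg]

theorem tendsto_prod_cos_sq_mul {ι β : Type*} {l : Filter β} {u : ι → ℝ}
    (hu : Summable fun i => u i ^ 2) {s : β → Finset ι} (hs : Tendsto s l atTop) {c : β → ℝ}
    {c₀ : ℝ} (hc : Tendsto c l (𝓝 c₀)) :
    Tendsto (fun n => ∏ i ∈ s n, cos (c n * u i) ^ 2) l (𝓝 (∏' i, cos (c₀ * u i) ^ 2)) := by
  have hmul : Multipliable fun i => cos (c₀ * u i) ^ 2 :=
    multipliable_cos_sq_of_summable_sq (by simpa only [mul_pow] using hu.mul_left (c₀ ^ 2))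
  have hcos (x : ℝ) : ‖cos x ^ 2‖ ≤ 1 := by simpa using cos_sq_le_one x
  have hbound (n : β) : ‖∏ i ∈ s n, cos (c n * u i) ^ 2 - ∏ i ∈ s n, cos (c₀ * u i) ^ 2‖
      ≤ |c n ^ 2 - c₀ ^ 2| * ∑' i, u i ^ 2 :=
    calc _ ≤ ∑ i ∈ s n, ‖cos (c n * u i) ^ 2 - cos (c₀ * u i) ^ 2‖ :=
          (s n).norm_prod_sub_prod_le_sum_norm_sub (fun _ _ => hcos _) (fun _ _ => hcos _)
      _ ≤ ∑ i ∈ s n, |c n ^ 2 - c₀ ^ 2| * u i ^ 2 := by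
        refine sum_le_sum fun i _ => (abs_cos_sq_sub_cos_sq_le _ _).trans_eq ?_
        rw [mul_pow, mul_pow, ← sub_mul, abs_mul, abs_of_nonneg (sq_nonneg (u i))]
      _ ≤ |c n ^ 2 - c₀ ^ 2| * ∑' i, u i ^ 2 := by
        rw [← mul_sum]
        gcongr
        exact hu.sum_le_tsum _ fun i _ => sq_nonneg _
  have hbound_lim : Tendsto (fun n => |c n ^ 2 - c₀ ^ 2| * ∑' i, u i ^ 2) l (𝓝 0) := by
    have := (((hc.pow 2).sub_const (c₀ ^ 2)).abs).mul_const (∑' i, u i ^ 2)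
    rwa [sub_self, abs_zero, zero_mul] at this
  simpa using (hmul.hasProd.comp hs).add (squeeze_zero_norm hbound hbound_lim)

theorem summable_sq_rpow_neg_nat_add_one {α : ℝ} (hα : 1 / 2 < α) :
    Summable fun i : ℕ => (((i : ℝ) + 1) ^ (-α)) ^ 2 := by
  refine ((summable_nat_add_iff 1).2 (summable_nat_rpow.2 (by linarith : -(2 * α) < -1))).congr
    fun i => ?_
  rw [← rpow_natCast, ← rpow_mul (by positivity)]
  push_cast
  ring_nf

theorem abs_sum_range_rpow_neg_sub_le {α : ℝ} (hα0 : 0 ≤ α) (hα1 : α < 1) (M : ℕ) :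
    |∑ i ∈ range M, ((i : ℝ) + 1) ^ (-α) - (M : ℝ) ^ (1 - α) / (1 - α)| ≤ 1 + (1 - α)⁻¹ := by
  have hanti : AntitoneOn (fun x : ℝ => x ^ (-α)) (Set.Icc 1 (1 + M)) :=
    fun x hx y _ hxy => rpow_le_rpow_of_nonpos (by linarith [hx.1]) hxy (by linarith)
  have hI : ∫ x in (1 : ℝ)..1 + M, x ^ (-α) = ((1 + M) ^ (1 - α) - 1) * (1 - α)⁻¹ := by
    rw [integral_rpow (Or.inl (by linarith)), one_rpow, div_eq_mul_inv, neg_add_eq_sub]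
  have hlow : ∫ x in (1 : ℝ)..1 + M, x ^ (-α) ≤ ∑ i ∈ range M, ((i : ℝ) + 1) ^ (-α) := by
    simpa only [add_comm (1 : ℝ)] using hanti.integral_le_sum
  have hup : ∑ i ∈ range M, ((i : ℝ) + 1) ^ (-α) ≤ 1 + ∫ x in (1 : ℝ)..1 + M, x ^ (-α) := calc
    _ ≤ ∑ i ∈ range (M + 1), ((i : ℝ) + 1) ^ (-α) :=
      sum_le_sum_of_subset_of_nonneg (range_subset_range.2 M.le_succ) fun i _ _ => by positivity
    _ = ∑ i ∈ range M, (1 + ((i + 1 : ℕ) : ℝ)) ^ (-α) + 1 := by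
      rw [sum_range_succ', Nat.cast_zero, zero_add, one_rpow]
      push_cast
      ring_nf
    _ ≤ 1 + ∫ x in (1 : ℝ)..1 + M, x ^ (-α) := by
      rw [add_comm]; gcongr; exact hanti.sum_le_integral
  have hM : (M : ℝ) ^ (1 - α) ≤ (1 + M) ^ (1 - α) :=
    rpow_le_rpow (by positivity) (by linarith) (by linarith)
  have hM' : (1 + M : ℝ) ^ (1 - α) ≤ 1 + M ^ (1 - α) := by
    simpa using rpow_add_le_add_rpow zero_le_one (M.cast_nonneg : (0 : ℝ) ≤ M)
      (by linarith) (by linarith)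
  have hk : 0 ≤ (1 - α)⁻¹ := inv_nonneg.2 (by linarith)
  rw [hI] at hlow hup
  rw [div_eq_mul_inv, abs_le]
  constructor <;>
    nlinarith [mul_le_mul_of_nonneg_right hM hk, mul_le_mul_of_nonneg_right hM' hk]

theorem isEquivalent_sum_range_rpow_neg {α : ℝ} (hα0 : 0 ≤ α) (hα1 : α < 1) :
    (fun M : ℕ => ∑ i ∈ range M, ((i : ℝ) + 1) ^ (-α)) ~[atTop]
      fun M => (M : ℝ) ^ (1 - α) / (1 - α) := by
  have hv : Tendsto (fun M : ℕ => (M : ℝ) ^ (1 - α) / (1 - α)) atTop atTop :=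
    ((tendsto_rpow_atTop (by linarith)).comp tendsto_natCast_atTop_atTop).atTop_div_const
      (by linarith)
  have hbounded : (fun M : ℕ =>
      ∑ i ∈ range M, ((i : ℝ) + 1) ^ (-α) - (M : ℝ) ^ (1 - α) / (1 - α))
      =O[atTop] fun _ => (1 : ℝ) :=
    IsBigO.of_bound (1 + (1 - α)⁻¹) (Eventually.of_forall fun M => by
      simpa using abs_sum_range_rpow_neg_sub_le hα0 hα1 M)
  exact hbounded.trans_isLittleO
    ((isLittleO_one_left_iff ℝ).2 (tendsto_norm_atTop_atTop.comp hv))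

theorem tendsto_two_mul_kacNorm_mul_rpow {α : ℝ} (hα0 : 0 ≤ α) (hα1 : α < 1) :
    Tendsto (fun N : ℕ => 2 * kacNorm α N * (N : ℝ) ^ (1 - α)) atTop
      (𝓝 (2 ^ (1 - α) * (1 - α))) := by
  have hhalf : (fun N : ℕ => ((N / 2 : ℕ) : ℝ)) ~[atTop] fun N => (N : ℝ) / 2 := by
    refine ((isEquivalent_nat_floor (R := ℝ)).comp_tendsto
      (tendsto_natCast_atTop_atTop.atTop_div_const two_pos)).congr_left ?_
    exact Eventually.of_forall fun N => by simp [Nat.floor_div_ofNat]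
  have hS : (fun N : ℕ => ∑ j ∈ Icc 1 (N / 2), (j : ℝ) ^ (-α)) ~[atTop]
      fun N => ((N : ℝ) / 2) ^ (1 - α) / (1 - α) := by
    have hsum := (isEquivalent_sum_range_rpow_neg hα0 hα1).comp_tendsto
      (Nat.tendsto_div_const_atTop two_ne_zero)
    refine (hsum.congr_left (Eventually.of_forall fun N => ?_)).trans
      ((hhalf.rpow fun N => by positivity).div IsEquivalent.refl)
    simp [sum_Icc_one_eq_sum_range]
  have hlim := (IsEquivalent.refl (u := fun N : ℕ => (N : ℝ) ^ (1 - α))).mul hS.inv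
  refine (hlim.symm.tendsto_nhds (tendsto_const_nhds.congr' ?_)).congr fun N => ?_
  · filter_upwards [eventually_gt_atTop 0] with N hN
    have h1α : (1 - α) ≠ 0 := by linarith
    simp only [Pi.mul_apply, Pi.inv_apply, div_rpow (N.cast_nonneg : (0 : ℝ) ≤ N) zero_le_two]
    field_simp
  · simp only [kacNorm, Pi.mul_apply, Pi.inv_apply]
    ring

/-- collapse in rescaled time, intermediate regime: for `1/2 < α < 1`,
`P_{N,α}(τ N^{1−α})` converges to the convergent infinite product
`∏_{j=1}^∞ cos²(2^{1−α}(1−α) τ / j^α)`. -/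
theorem stmt_10 (α : ℝ) (hα0 : 1 / 2 < α) (hα1 : α < 1) (τ : ℝ) :
    Multipliable (fun j : ℕ =>
      Real.cos (2 ^ (1 - α) * (1 - α) * τ / ((j : ℝ) + 1) ^ α) ^ 2) ∧
    Filter.Tendsto (fun N : ℕ => relaxProd α N (τ * (N : ℝ) ^ (1 - α))) Filter.atTop
      (nhds (∏' j : ℕ, Real.cos (2 ^ (1 - α) * (1 - α) * τ / ((j : ℝ) + 1) ^ α) ^ 2)) := by
  set c := 2 ^ (1 - α) * (1 - α) * τ
  have hu := summable_sq_rpow_neg_nat_add_one hα0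
  have hterm (j : ℕ) :
      cos (c / ((j : ℝ) + 1) ^ α) ^ 2 = cos (c * ((j : ℝ) + 1) ^ (-α)) ^ 2 := by
    rw [rpow_neg (by positivity), div_eq_mul_inv]
  simp only [hterm]
  refine ⟨multipliable_cos_sq_of_summable_sq
    (by simpa only [mul_pow] using hu.mul_left (c ^ 2)), ?_⟩
  have hc : Tendsto (fun N : ℕ => 2 * kacNorm α N * (τ * (N : ℝ) ^ (1 - α))) atTop (𝓝 c) := by
    convert (tendsto_two_mul_kacNorm_mul_rpow (by linarith) hα1).mul_const τ using 1
    · ext N; ring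
  refine (tendsto_prod_cos_sq_mul hu
    (tendsto_finset_range.comp (Nat.tendsto_div_const_atTop two_ne_zero)) hc).congr fun N => ?_
  simp [relaxProd, prod_Icc_one_eq_prod_range, mul_assoc]
end
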